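/- Let G be a 2-connected graph with normal spanning tree T and compatible numbering, and let (A, B) be a half-connected 2-separation of G with separator {a, b}, a < b. Then A \ B and B \ A are cyclic intervals of [n] \ {a, b} (i.e., each is an interval of the circular ordering of the remaining vertices). -/
import Mathlib
set_option linter.unusedSectionVars false
set_option linter.unusedVariables false
set_option maxHeartbeats 1000000


open SimpleGraph

variable {V : Type*}

/-- `u` lies on every path (hence the unique path) from root `r` to `v` in tree `T`:
`u` is an ancestor of `v`. -/
def Anc (T : SimpleGraph V) (r u v : V) : Prop :=
  ∀ p : T.Walk r v, p.IsPath → u ∈ p.support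

/-- proper ancestor -/
def PAnc (T : SimpleGraph V) (r u v : V) : Prop :=
  Anc T r u v ∧ u ≠ v

/-- `T` is a normal spanning tree of `G` rooted at `r`. -/
def IsNormalSpanningTree (G T : SimpleGraph V) (r : V) : Prop :=
  T.IsTree ∧ T ≤ G ∧ ∀ u v : V, G.Adj u v → Anc T r u v ∨ Anc T r v u

/-- `w` is a child of `v` in the rooted tree `(T, r)`. -/
def IsChild (T : SimpleGraph V) (r v w : V) : Prop :=
  T.Adj v w ∧ Anc T r v w

/-- the set of descendants of `v` (including `v`). -/
def Desc (T : SimpleGraph V) (r v : V) : Set V := {u | Anc T r v u}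

/-- `L(v)`: proper ancestors of `v` adjacent in `G` to some descendant of `v`. -/
def Lset (G T : SimpleGraph V) (r v : V) : Set V :=
  {u | PAnc T r u v ∧ ∃ w, Anc T r v w ∧ G.Adj u w}

/-- `x` is the `k`-th lowpoint of `v`: the `k`-th lowest element of `L(v)`,
or `v` itself if `|L(v)| < k`. -/
def IsKthLowpoint (G T : SimpleGraph V) (r : V) (k : ℕ) (v x : V) : Prop :=
  (x ∈ Lset G T r v ∧ {u ∈ Lset G T r v | PAnc T r u x}.ncard = k - 1) ∨
  ((Lset G T r v).ncard < k ∧ x = v)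

/-- `x` is the highpoint of `v`: the highest element of `L(v) \ {parent v}`,
or `v` itself if that set is empty. -/
def IsHighpoint (G T : SimpleGraph V) (r : V) (v x : V) : Prop :=
  (x ∈ Lset G T r v ∧ ¬ IsChild T r x v ∧
    ∀ u ∈ Lset G T r v, ¬ IsChild T r u v → Anc T r u x) ∨
  ((∀ u ∈ Lset G T r v, IsChild T r u v) ∧ x = v)

/-- a numbering of the vertices by `1, …, n`. -/
def IsNumbering [Fintype V] (num : V → ℕ) : Prop :=
  Function.Injective num ∧ ∀ v, num v ∈ Set.Icc 1 (Fintype.card V)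

/-- The numbering `num` is compatible with the normal spanning tree `(T, r)`,
where `lwpt1 v` and `lwpt2 v` are the first and second lowpoints of `v`. -/
def CompatibleNumbering [Fintype V] (G T : SimpleGraph V) (r : V)
    (num : V → ℕ) (lwpt1 lwpt2 : V → V) : Prop :=
  IsNumbering num ∧
  (∀ v : V, num '' Desc T r v = Set.Icc (num v) (num v + (Desc T r v).ncard - 1)) ∧
  (∀ v, IsKthLowpoint G T r 1 v (lwpt1 v)) ∧
  (∀ v, IsKthLowpoint G T r 2 v (lwpt2 v)) ∧
  (∀ p j k : V, IsChild T r p j → IsChild T r p k → num j < num k →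
    num (lwpt1 k) < num (lwpt1 j) ∨
      (lwpt1 j = lwpt1 k ∧ num (lwpt2 j) ≤ num (lwpt2 k)))

/-- `w` is the left child of `v`: its largest-numbered child. -/
def IsLeftChild (T : SimpleGraph V) (r : V) (num : V → ℕ) (v w : V) : Prop :=
  IsChild T r v w ∧ ∀ u, IsChild T r v u → num u ≤ num w

/-- `w` is a leftmost descendant of `v`. -/
def LeftmostDesc (T : SimpleGraph V) (r : V) (num : V → ℕ) (v w : V) : Prop :=
  Relation.ReflTransGen (IsLeftChild T r num) v w

/-- `T[a,b]` is a leftmost path: `b` is a leftmost descendant of some child of `a`. -/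
def IsLeftmostPath (T : SimpleGraph V) (r : V) (num : V → ℕ) (a b : V) : Prop :=
  ∃ a', IsChild T r a a' ∧ LeftmostDesc T r num a' b

/-- a back-edge `(x, y)` with `x` a descendant of `y`. -/
def IsBackEdge (G T : SimpleGraph V) (r : V) (x y : V) : Prop :=
  G.Adj x y ∧ ¬ T.Adj x y ∧ PAnc T r y x

/-- `T[a,b]` is stable. -/
def Stable (G T : SimpleGraph V) (r : V) (num : V → ℕ) (a b : V) : Prop :=
  ∃ a', IsChild T r a a' ∧ LeftmostDesc T r num a' b ∧
    ∀ x y, IsBackEdge G T r x y → num a' ≤ num x → num x < num b → num a ≤ num y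

/-- `(A, B)` is a separation of `G`. -/
def IsSeparation (G : SimpleGraph V) (A B : Set V) : Prop :=
  A ∪ B = Set.univ ∧ (A \ B).Nonempty ∧ (B \ A).Nonempty ∧
    ∀ u ∈ A \ B, ∀ v ∈ B \ A, ¬ G.Adj u v

/-- a 2-separation. -/
def IsSeparation2 (G : SimpleGraph V) (A B : Set V) : Prop :=
  IsSeparation G A B ∧ (A ∩ B).ncard = 2

/-- two separations are nested (up to swapping sides). -/
def Nested (A B C D : Set V) : Prop :=
  (A ⊆ C ∧ D ⊆ B) ∨ (A ⊆ D ∧ C ⊆ B) ∨ (B ⊆ C ∧ D ⊆ A) ∨ (B ⊆ D ∧ C ⊆ A)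

/-- a totally-nested 2-separation. -/
def TotallyNested2 (G : SimpleGraph V) (A B : Set V) : Prop :=
  IsSeparation2 G A B ∧ ∀ C D : Set V, IsSeparation2 G C D → Nested A B C D

/-- a half-connected separation. -/
def HalfConnected (G : SimpleGraph V) (A B : Set V) : Prop :=
  (G.induce (A \ B)).Connected ∨ (G.induce (B \ A)).Connected

/-- the open tree path `T(a,b)`. -/
def Topen (T : SimpleGraph V) (r a b : V) : Set V :=
  {u | PAnc T r a u ∧ PAnc T r u b}

/-- type-2 separations. -/
def IsType2Sep (G T : SimpleGraph V) (r : V) (A B : Set V) : Prop :=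
  IsSeparation2 G A B ∧ ∃ a b : V, A ∩ B = {a, b} ∧ r ≠ a ∧ r ≠ b ∧
    (Topen T r a b).Nonempty ∧
    ((r ∈ A \ B ∧ Topen T r a b ⊆ B \ A) ∨ (r ∈ B \ A ∧ Topen T r a b ⊆ A \ B))

/-- type-1 separations. -/
def IsType1Sep (G T : SimpleGraph V) (r : V) (A B : Set V) : Prop :=
  IsSeparation2 G A B ∧ ¬ IsType2Sep G T r A B

/-- 2-connectivity: more than two vertices and no cutvertex. -/
def TwoConnected [Fintype V] (G : SimpleGraph V) : Prop :=
  2 < Fintype.card V ∧ ∀ v : V, (G.induce {u | u ≠ v}).Connected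

/-- `(A,B)` separates `u` and `v`. -/
def SepSeparates (A B : Set V) (u v : V) : Prop :=
  (u ∈ A \ B ∧ v ∈ B \ A) ∨ (u ∈ B \ A ∧ v ∈ A \ B)

/-- minimal separation: each separator vertex has neighbours on both proper sides. -/
def IsMinimalSep (G : SimpleGraph V) (A B : Set V) : Prop :=
  IsSeparation G A B ∧ ∀ v ∈ A ∩ B,
    (∃ u ∈ A \ B, G.Adj v u) ∧ (∃ u ∈ B \ A, G.Adj v u)

/-- `m` is the number of the smallest-numbered neighbour of `v`. -/
def IsNmin (G : SimpleGraph V) (num : V → ℕ) (v : V) (m : ℕ) : Prop :=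
  (∃ u, G.Adj v u ∧ num u = m) ∧ ∀ u, G.Adj v u → m ≤ num u

/-- `w` is the second-largest child of `v`. -/
def IsSecondLargestChild (T : SimpleGraph V) (r : V) (num : V → ℕ) (v w : V) : Prop :=
  IsChild T r v w ∧ ({u | IsChild T r v u ∧ num w < num u}).ncard = 1

/-- `m = witn(v)`. -/
def IsWitn (G T : SimpleGraph V) (r : V) (num : V → ℕ) (lwpt1 : V → V)
    (v : V) (m : ℕ) : Prop :=
  (∃ w, IsSecondLargestChild T r num v w ∧
    ∃ nm, IsNmin G num v nm ∧ m = min nm (num (lwpt1 w))) ∨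
  ((¬ ∃ w, IsSecondLargestChild T r num v w) ∧ IsNmin G num v m)

/-- `S` is an interval of `X` with respect to the numbering. -/
def IsIntervalIn (num : V → ℕ) (X S : Set V) : Prop :=
  S ⊆ X ∧ ∀ x ∈ S, ∀ z ∈ S, ∀ y ∈ X, num x ≤ num y → num y ≤ num z → y ∈ S

/-- `S` is a cyclic interval of `X`. -/
def IsCyclicIntervalIn (num : V → ℕ) (X S : Set V) : Prop :=
  IsIntervalIn num X S ∨ IsIntervalIn num X (X \ S)

section Infra
variable {V : Type*} [Fintype V] {G T : SimpleGraph V} {r : V} {num : V → ℕ}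
  {lwpt1 lwpt2 : V → V}

lemma anc_of_path (hT : T.IsTree) {u v : V} (p : T.Walk r v) (hp : p.IsPath)
    (hu : u ∈ p.support) : Anc T r u v := by
  intro q hq
  obtain ⟨p', -, hun⟩ := hT.existsUnique_path r v
  rw [hun q hq, ← hun p hp]; exact hu

lemma anc_refl (v : V) : Anc T r v v := fun p _ => p.end_mem_support

lemma anc_root (v : V) : Anc T r r v := fun p _ => p.start_mem_support

lemma anc_trans (hT : T.IsTree) {u v w : V} (h1 : Anc T r u v) (h2 : Anc T r v w) :
    Anc T r u w := by
  classical
  intro p hp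
  have hv : v ∈ p.support := h2 p hp
  exact p.support_takeUntil_subset hv (h1 (p.takeUntil v hv) (hp.takeUntil hv))

lemma num_desc (hnum : CompatibleNumbering G T r num lwpt1 lwpt2) {u v : V}
    (h : Anc T r u v) :
    num u ≤ num v ∧ num v ≤ num u + (Desc T r u).ncard - 1 := by
  have : num v ∈ num '' Desc T r u := ⟨v, h, rfl⟩
  rw [hnum.2.1 u] at this
  exact this

lemma num_le_of_anc (hnum : CompatibleNumbering G T r num lwpt1 lwpt2) {u v : V}
    (h : Anc T r u v) : num u ≤ num v := (num_desc hnum h).1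

lemma anc_of_num (hnum : CompatibleNumbering G T r num lwpt1 lwpt2) {u v : V}
    (h1 : num u ≤ num v) (h2 : num v ≤ num u + (Desc T r u).ncard - 1) :
    Anc T r u v := by
  have : num v ∈ num '' Desc T r u := by rw [hnum.2.1 u]; exact ⟨h1, h2⟩
  obtain ⟨w, hw, he⟩ := this
  rwa [hnum.1.1 he] at hw

lemma anc_antisymm (hnum : CompatibleNumbering G T r num lwpt1 lwpt2) {u v : V}
    (h1 : Anc T r u v) (h2 : Anc T r v u) : u = v :=
  hnum.1.1 (le_antisymm (num_le_of_anc hnum h1) (num_le_of_anc hnum h2))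

lemma num_lt_of_panc (hnum : CompatibleNumbering G T r num lwpt1 lwpt2) {u v : V}
    (h : Anc T r u v) (hne : u ≠ v) : num u < num v :=
  lt_of_le_of_ne (num_le_of_anc hnum h) (fun he => hne (hnum.1.1 he))

lemma anc_comparable (hnum : CompatibleNumbering G T r num lwpt1 lwpt2) {u v w : V}
    (hu : Anc T r u w) (hv : Anc T r v w) : Anc T r u v ∨ Anc T r v u := by
  rcases le_total (num u) (num v) with h | h
  · exact Or.inl (anc_of_num hnum h (le_trans (num_le_of_anc hnum hv) (num_desc hnum hu).2))
  · exact Or.inr (anc_of_num hnum h (le_trans (num_le_of_anc hnum hu) (num_desc hnum hv).2))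

lemma desc_ncard_pos (v : V) : 1 ≤ (Desc T r v).ncard :=
  (Set.ncard_pos (Set.toFinite _)).mpr ⟨v, anc_refl v⟩

-- the subtree interval of a descendant is contained in that of the ancestor
lemma desc_ub (hT : T.IsTree) (hnum : CompatibleNumbering G T r num lwpt1 lwpt2) {u v : V}
    (h : Anc T r u v) :
    num v + (Desc T r v).ncard - 1 ≤ num u + (Desc T r u).ncard - 1 := by
  have h1 : 1 ≤ (Desc T r v).ncard := desc_ncard_pos v
  have : num v + (Desc T r v).ncard - 1 ∈ num '' Desc T r v := by
    rw [hnum.2.1 v]; constructor <;> omega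
  obtain ⟨w, hw, he⟩ := this
  have := (num_desc hnum (anc_trans hT h hw)).2
  omega

lemma exists_parent (hT : T.IsTree) {v : V} (hv : v ≠ r) :
    ∃ p, T.Adj p v ∧ Anc T r p v := by
  obtain ⟨q, hq, -⟩ := hT.existsUnique_path r v
  obtain ⟨x, h, q2, hq2⟩ := SimpleGraph.Walk.exists_eq_cons_of_ne hv q.reverse
  refine ⟨x, h.symm, anc_of_path hT q hq ?_⟩
  have : x ∈ q.reverse.support := by rw [hq2]; right; exact q2.start_mem_support
  rwa [SimpleGraph.Walk.support_reverse, List.mem_reverse] at this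

-- any proper ancestor of v is an ancestor of each adjacent ancestor (= of the parent)
lemma anc_to_adj_anc (hT : T.IsTree) (hnum : CompatibleNumbering G T r num lwpt1 lwpt2)
    {u v : V} (hadj : T.Adj u v) (hanc : Anc T r u v) :
    ∀ x, Anc T r x v → x ≠ v → Anc T r x u := by
  have hvr : v ≠ r := by
    rintro rfl
    exact hadj.ne (anc_antisymm hnum hanc (anc_root u))
  obtain ⟨q, hq, huniq⟩ := hT.existsUnique_path r v
  -- build the path r..u extended by the edge u–v
  obtain ⟨q1, hq1, -⟩ := hT.existsUnique_path r u
  have hvq1 : v ∉ q1.support := fun hmem =>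
    hadj.ne' (anc_antisymm hnum (anc_of_path hT q1 hq1 hmem) hanc)
  have hq1' : (Walk.cons hadj.symm q1.reverse).reverse.IsPath := by
    rw [SimpleGraph.Walk.isPath_reverse_iff]
    rw [SimpleGraph.Walk.cons_isPath_iff]
    refine ⟨hq1.reverse, ?_⟩
    rwa [SimpleGraph.Walk.support_reverse, List.mem_reverse]
  have heq : q = (Walk.cons hadj.symm q1.reverse).reverse := by
    rw [huniq _ hq1']
  intro x hx hxv
  have hxq : x ∈ q.support := hx q hq
  rw [heq, SimpleGraph.Walk.support_reverse, List.mem_reverse,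
    SimpleGraph.Walk.support_cons, List.mem_cons] at hxq
  rcases hxq with h | h
  · exact absurd h hxv
  · rw [← List.mem_reverse, ← SimpleGraph.Walk.support_reverse] at h
    exact anc_of_path hT q1.reverse.reverse (by simpa using hq1) h
lemma anc_root_eq (hnum : CompatibleNumbering G T r num lwpt1 lwpt2) {u : V}
    (h : Anc T r u r) : u = r := anc_antisymm hnum h (anc_root u)

lemma one_le_num (hnum : CompatibleNumbering G T r num lwpt1 lwpt2) (v : V) :
    1 ≤ num v := (hnum.1.2 v).1

lemma exists_child_toward (hT : T.IsTree) (hnum : CompatibleNumbering G T r num lwpt1 lwpt2)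
    {u w : V} (h : Anc T r u w) (hne : u ≠ w) :
    ∃ c, T.Adj u c ∧ Anc T r u c ∧ Anc T r c w := by
  suffices H : ∀ n, ∀ w, num w ≤ n → Anc T r u w → u ≠ w → ∃ c, T.Adj u c ∧ Anc T r u c ∧ Anc T r c w by
    exact H (num w) w le_rfl h hne
  intro n
  induction n with
  | zero => intro w hw _ _; have := one_le_num hnum w; omega
  | succ n ih =>
    intro w hw hanc hne
    have hwr : w ≠ r := by
      rintro rfl; exact hne (anc_root_eq hnum hanc)
    obtain ⟨p, hadj, hpanc⟩ := exists_parent hT hwr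
    by_cases hpu : p = u
    · exact ⟨w, hpu ▸ hadj, hpu ▸ hpanc, anc_refl w⟩
    · have hup : Anc T r u p := anc_to_adj_anc hT hnum hadj hpanc u hanc hne
      have hplt : num p < num w := num_lt_of_panc hnum hpanc hadj.ne
      obtain ⟨c, h1, h2, h3⟩ := ih p (by omega) hup (Ne.symm hpu)
      exact ⟨c, h1, h2, anc_trans hT h3 hpanc⟩

-- distinct children have disjoint subtrees
lemma children_disjoint (hT : T.IsTree) (hnum : CompatibleNumbering G T r num lwpt1 lwpt2)
    {u c c' w : V} (hc : T.Adj u c) (hca : Anc T r u c) (hc' : T.Adj u c') (hca' : Anc T r u c')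
    (hne : c ≠ c') (h1 : Anc T r c w) (h2 : Anc T r c' w) : False := by
  wlog hlt : num c < num c' generalizing c c'
  · exact this hc' hca' hc hca (Ne.symm hne) h2 h1
      (lt_of_le_of_ne (not_lt.mp hlt) (fun he => hne (hnum.1.1 he.symm)))
  have hcc' : Anc T r c c' := by
    rcases anc_comparable hnum h1 h2 with h | h
    · exact h
    · exact absurd (num_le_of_anc hnum h) (by omega)
  have : Anc T r c u := anc_to_adj_anc hT hnum hc' hca' c hcc' (fun he => by subst he; omega)
  exact hc.ne (anc_antisymm hnum hca this)

-- numeric separation of sibling subtrees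
lemma sibling_lt (hT : T.IsTree) (hnum : CompatibleNumbering G T r num lwpt1 lwpt2)
    {u c c' w : V} (hc : T.Adj u c) (hca : Anc T r u c) (hc' : T.Adj u c') (hca' : Anc T r u c')
    (hlt : num c < num c') (hw : Anc T r c w) : num w < num c' := by
  by_contra hge
  push_neg at hge
  have : Anc T r c c' := anc_of_num hnum (le_of_lt hlt) (le_trans hge (num_desc hnum hw).2)
  exact children_disjoint hT hnum hc hca hc' hca' (fun he => by subst he; omega) this (anc_refl c')

lemma lset_panc {v u : V} (h : u ∈ Lset G T r v) : Anc T r u v := h.1.1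

lemma lset_chain_lt (hnum : CompatibleNumbering G T r num lwpt1 lwpt2) {v x y : V}
    (hx : x ∈ Lset G T r v) (hy : y ∈ Lset G T r v) (h : num x < num y) :
    Anc T r x y ∧ x ≠ y := by
  refine ⟨?_, fun he => by rw [he] at h; omega⟩
  rcases anc_comparable hnum (lset_panc hx) (lset_panc hy) with hh | hh
  · exact hh
  · exact absurd (num_le_of_anc hnum hh) (by omega)

lemma lwpt1_min (hnum : CompatibleNumbering G T r num lwpt1 lwpt2) {v u : V}
    (hu : u ∈ Lset G T r v) :
    lwpt1 v ∈ Lset G T r v ∧ ∀ w ∈ Lset G T r v, num (lwpt1 v) ≤ num w := by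
  rcases hnum.2.2.1 v with ⟨hm, hc⟩ | ⟨hlt, _⟩
  · refine ⟨hm, fun w hw => ?_⟩
    by_contra hgt
    push_neg at hgt
    have hp : w ∈ {u ∈ Lset G T r v | PAnc T r u (lwpt1 v)} :=
      ⟨hw, (lset_chain_lt hnum hw hm hgt).1, (lset_chain_lt hnum hw hm hgt).2⟩
    have : {u ∈ Lset G T r v | PAnc T r u (lwpt1 v)} = ∅ :=
      Set.ncard_eq_zero (Set.toFinite _) |>.mp (by simpa using hc)
    rw [this] at hp; exact hp
  · exfalso
    have : Lset G T r v = ∅ := Set.ncard_eq_zero (Set.toFinite _) |>.mp (by omega)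
    rw [this] at hu; exact hu

lemma lwpt2_le (hnum : CompatibleNumbering G T r num lwpt1 lwpt2) {v u : V}
    (hu : u ∈ Lset G T r v) (hgt : num (lwpt1 v) < num u) :
    lwpt2 v ∈ Lset G T r v ∧ num (lwpt2 v) ≤ num u := by
  have h1 := lwpt1_min hnum hu
  have hpairsub : {lwpt1 v, u} ⊆ Lset G T r v := by
    rintro z (rfl | rfl); exacts [h1.1, hu]
  have hpaircard : ({lwpt1 v, u} : Set V).ncard = 2 :=
    Set.ncard_pair (fun he => by rw [he] at hgt; omega)
  rcases hnum.2.2.2.1 v with ⟨hm, hc⟩ | ⟨hlt, _⟩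
  · refine ⟨hm, ?_⟩
    by_contra hgt2
    push_neg at hgt2
    have hsub : {lwpt1 v, u} ⊆ {w ∈ Lset G T r v | PAnc T r w (lwpt2 v)} := by
      rintro z (rfl | rfl)
      · exact ⟨h1.1, (lset_chain_lt hnum h1.1 hm (by omega)).1,
          (lset_chain_lt hnum h1.1 hm (by omega)).2⟩
      · exact ⟨hu, (lset_chain_lt hnum hu hm hgt2).1, (lset_chain_lt hnum hu hm hgt2).2⟩
    have := Set.ncard_le_ncard hsub (Set.toFinite _)
    rw [hpaircard] at this
    omega
  · exfalso
    have := Set.ncard_le_ncard hpairsub (Set.toFinite _)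
    rw [hpaircard] at this
    omega

lemma lwpt_pair (hnum : CompatibleNumbering G T r num lwpt1 lwpt2) {v x y : V}
    (hx : x ∈ Lset G T r v) (hy : y ∈ Lset G T r v) (hxy : num x < num y)
    (hsub : Lset G T r v ⊆ {x, y}) : lwpt1 v = x ∧ lwpt2 v = y := by
  have h1 := lwpt1_min hnum hx
  have hl1 : lwpt1 v = x := by
    rcases hsub h1.1 with h | h
    · exact h
    · exfalso; have := h1.2 x hx; rw [h] at this; omega
  refine ⟨hl1, ?_⟩
  have h2 := lwpt2_le hnum hy (by rw [hl1]; exact hxy)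
  rcases hsub h2.1 with h | h
  · exfalso
    rcases hnum.2.2.2.1 v with ⟨hm, hc⟩ | ⟨hlt, _⟩
    · have hempty : {w ∈ Lset G T r v | PAnc T r w (lwpt2 v)} = ∅ := by
        ext z
        simp only [Set.mem_setOf_eq, Set.mem_empty_iff_false, iff_false]
        rintro ⟨hz, hzp⟩
        have := num_lt_of_panc hnum hzp.1 hzp.2
        rw [h] at this
        rcases hsub hz with rfl | rfl
        · omega
        · omega
      rw [hempty] at hc
      simp at hc
    · have hpairsub : {x, y} ⊆ Lset G T r v := by rintro z (rfl | rfl); exacts [hx, hy]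
      have := Set.ncard_le_ncard hpairsub (Set.toFinite _)
      rw [Set.ncard_pair (fun he => by rw [he] at hxy; omega)] at this
      omega
  · exact h
lemma walk_cross {W : Type*} {H : SimpleGraph W} (K : Set W) :
    ∀ {x y : W}, H.Walk x y → x ∈ K → y ∉ K →
      ∃ p q, H.Adj p q ∧ p ∈ K ∧ q ∉ K := by
  intro x y w
  induction w with
  | nil => intro h h2; exact absurd h h2
  | @cons u v y hadj w ih =>
    intro hx hy
    by_cases hm : v ∈ K
    · exact ih hm hy
    · exact ⟨u, v, hadj, hx, hm⟩

lemma reach_ind {W : Type*} {H : SimpleGraph W} (P : W → Prop)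
    (step : ∀ x y, P x → H.Adj x y → P y) {x y : W} (h : H.Reachable x y) (hx : P x) : P y := by
  obtain ⟨w⟩ := h
  induction w with
  | nil => exact hx
  | @cons u v y hadj w ih => exact ih (step u v hx hadj)

lemma cross_G (hG : TwoConnected G) (t : V) (K : Set V) {x y : V}
    (hx : x ∈ K) (hxt : x ≠ t) (hy : y ∉ K) (hyt : y ≠ t) :
    ∃ p q, G.Adj p q ∧ p ∈ K ∧ p ≠ t ∧ q ∉ K ∧ q ≠ t := by
  have hreach : (G.induce {u | u ≠ t}).Reachable ⟨x, hxt⟩ ⟨y, hyt⟩ :=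
    (hG.2 t).preconnected ⟨x, hxt⟩ ⟨y, hyt⟩
  obtain ⟨w⟩ := hreach
  obtain ⟨p, q, hadj, hp, hq⟩ :=
    walk_cross (K := {z : {u : V // u ≠ t} | (z : V) ∈ K}) w hx hy
  exact ⟨(p : V), (q : V), hadj, hp, p.2, hq, q.2⟩

lemma cross_conn {C : Set V} (hc : (G.induce C).Connected) (K : Set V) {x y : V}
    (hx : x ∈ C) (hxK : x ∈ K) (hy : y ∈ C) (hyK : y ∉ K) :
    ∃ p q, G.Adj p q ∧ p ∈ C ∧ p ∈ K ∧ q ∈ C ∧ q ∉ K := by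
  have hreach : (G.induce C).Reachable ⟨x, hx⟩ ⟨y, hy⟩ := hc.preconnected ⟨x, hx⟩ ⟨y, hy⟩
  obtain ⟨w⟩ := hreach
  obtain ⟨p, q, hadj, hp, hq⟩ := walk_cross (K := {z : C | (z : V) ∈ K}) w hxK hyK
  exact ⟨(p : V), (q : V), hadj, p.2, hp, q.2, hq⟩

-- minimum of a connected induced subgraph is an ancestor of all its vertices
lemma conn_min_anc (hT : IsNormalSpanningTree G T r)
    (hnum : CompatibleNumbering G T r num lwpt1 lwpt2) {C : Set V}
    (hc : (G.induce C).Connected) {m : V} (hm : m ∈ C) (hmin : ∀ u ∈ C, num m ≤ num u) :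
    ∀ u ∈ C, Anc T r m u := by
  intro u hu
  have hreach : (G.induce C).Reachable ⟨m, hm⟩ ⟨u, hu⟩ := hc.preconnected _ _
  refine reach_ind (P := fun z : C => Anc T r m (z : V)) ?_ hreach (anc_refl m)
  intro x y hx hadj
  have hGadj : G.Adj (x : V) (y : V) := hadj
  rcases hT.2.2 _ _ hGadj with h | h
  · exact anc_trans hT.1 hx h
  · rcases anc_comparable hnum hx h with h2 | h2
    · exact h2
    · have h3 : num (y : V) ≤ num m := num_le_of_anc hnum h2
      have h4 : num m ≤ num (y : V) := hmin _ y.2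
      have : (y : V) = m := hnum.1.1 (by omega)
      rw [this]; exact anc_refl m
end Infra
section Main
variable {V : Type*} [Fintype V] {G T : SimpleGraph V} {r : V} {num : V → ℕ}
  {lwpt1 lwpt2 : V → V} {a b : V} {C D : Set V}

lemma memX {y : V} : y ∈ (Set.univ \ {a, b} : Set V) ↔ y ≠ a ∧ y ≠ b := by
  simp [Set.mem_diff, Set.mem_insert_iff, not_or]

-- a connected-in-tree chain argument: a set closed under G-edges avoiding {a,b}
-- contains the whole subtree chain between u and any descendant w, provided the
-- tree-chain between them avoids a and b.
lemma side_chain (hT : IsNormalSpanningTree G T r)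
    (hnum : CompatibleNumbering G T r num lwpt1 lwpt2) {S : Set V}
    (hcl : ∀ u ∈ S, ∀ w, G.Adj u w → w ≠ a → w ≠ b → w ∈ S) {u : V} (hu : u ∈ S) :
    ∀ w, Anc T r u w → (∀ t, Anc T r u t → Anc T r t w → t ≠ a ∧ t ≠ b) → w ∈ S := by
  suffices H : ∀ n, ∀ w, num w ≤ n → Anc T r u w →
      (∀ t, Anc T r u t → Anc T r t w → t ≠ a ∧ t ≠ b) → w ∈ S by
    intro w h1 h2; exact H (num w) w le_rfl h1 h2
  intro n
  induction n with
  | zero => intro w hw _ _; have := one_le_num hnum w; omega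
  | succ n ih =>
    intro w hw hanc hchain
    by_cases hwu : w = u
    · rwa [hwu]
    have hwr : w ≠ r := by
      rintro rfl; exact hwu (anc_root_eq hnum hanc).symm
    obtain ⟨p, hadj, hpanc⟩ := exists_parent hT.1 hwr
    have hup : Anc T r u p := anc_to_adj_anc hT.1 hnum hadj hpanc u hanc (Ne.symm hwu)
    have hplt : num p < num w := num_lt_of_panc hnum hpanc hadj.ne
    have hpS : p ∈ S := ih p (by omega) hup
      (fun t h1 h2 => hchain t h1 (anc_trans hT.1 h2 hpanc))
    exact hcl p hpS w (hT.2.1 hadj) (hchain w hanc (anc_refl w)).1 (hchain w hanc (anc_refl w)).2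

-- crossing out of a subtree avoiding vertex t yields an element of `Lset`
lemma exists_L_avoid (hG : TwoConnected G) (hT : IsNormalSpanningTree G T r)
    (hnum : CompatibleNumbering G T r num lwpt1 lwpt2) {v t y : V}
    (hvt : v ≠ t) (hy : ¬ Anc T r v y) (hyt : y ≠ t) :
    ∃ u, u ∈ Lset G T r v ∧ u ≠ t := by
  obtain ⟨p, q, hadj, hp, hpt, hq, hqt⟩ :=
    cross_G hG t {w | Anc T r v w} (anc_refl v) hvt hy hyt
  have hp' : Anc T r v p := hp
  have hq' : ¬ Anc T r v q := hq
  rcases hT.2.2 _ _ hadj with h | h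
  · exact absurd (anc_trans hT.1 hp' h) hq'
  · rcases anc_comparable hnum h hp' with h2 | h2
    · refine ⟨q, ⟨⟨h2, ?_⟩, p, hp', hadj.symm⟩, hqt⟩
      intro he; exact hq' (by rw [he]; exact anc_refl v)
    · exact absurd h2 hq'

/-- All the context of the half-connected separation, with `C` the connected side. -/
structure SepCtx [Fintype V] (G T : SimpleGraph V) (r : V) (num : V → ℕ)
    (lwpt1 lwpt2 : V → V) (a b : V) (C D : Set V) : Prop where
  hG : TwoConnected G
  hT : IsNormalSpanningTree G T r
  hnum : CompatibleNumbering G T r num lwpt1 lwpt2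
  hab : num a < num b
  hCX : ∀ u ∈ C, u ≠ a ∧ u ≠ b
  hDX : ∀ u ∈ D, u ≠ a ∧ u ≠ b
  hU : ∀ u : V, u ≠ a → u ≠ b → u ∈ C ∨ u ∈ D
  hI : ∀ u, u ∈ C → u ∈ D → False
  hE : ∀ u ∈ C, ∀ v ∈ D, ¬ G.Adj u v
  hCne : C.Nonempty
  hDne : D.Nonempty
  hconn : (G.induce C).Connected

namespace SepCtx

variable (ctx : SepCtx G T r num lwpt1 lwpt2 a b C D)
include ctx

lemma anb : a ≠ b := fun h => by have := ctx.hab; rw [h] at this; omega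

lemma clC : ∀ u ∈ C, ∀ w, G.Adj u w → w ≠ a → w ≠ b → w ∈ C := by
  intro u hu w hadj hwa hwb
  rcases ctx.hU w hwa hwb with h | h
  · exact h
  · exact absurd hadj (ctx.hE u hu w h)

lemma clD : ∀ u ∈ D, ∀ w, G.Adj u w → w ≠ a → w ≠ b → w ∈ D := by
  intro u hu w hadj hwa hwb
  rcases ctx.hU w hwa hwb with h | h
  · exact absurd hadj.symm (ctx.hE w h u hu)
  · exact h

lemma rb : r ≠ b := by
  intro h
  have := num_le_of_anc ctx.hnum (anc_root a)
  rw [h] at this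
  have := ctx.hab
  omega

lemma ancab_aux {S : Set V} (hSne : S.Nonempty) (hSX : ∀ u ∈ S, u ≠ a ∧ u ≠ b)
    (hScl : ∀ u ∈ S, ∀ w, G.Adj u w → w ≠ a → w ≠ b → w ∈ S) (hrS : r ∉ S) :
    Anc T r a b := by
  have hnum := ctx.hnum
  have hT := ctx.hT
  obtain ⟨u₀, hu₀, hmin⟩ := Set.exists_min_image S num (Set.toFinite _) hSne
  have hur : u₀ ≠ r := fun h => hrS (h ▸ hu₀)
  obtain ⟨p₀, hadj, hpanc⟩ := exists_parent hT.1 hur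
  have hp₀ : p₀ = a ∨ p₀ = b := by
    by_contra hcon
    push_neg at hcon
    have : p₀ ∈ S := hScl u₀ hu₀ p₀ (hT.2.1 hadj).symm hcon.1 hcon.2
    have := hmin p₀ this
    have := num_lt_of_panc hnum hpanc hadj.ne
    omega
  -- in either case, if the "other" endpoint is not in the subtree of u₀,
  -- a crossing argument gives a contradiction / the goal
  rcases hp₀ with hpa | hpa
  all_goals rw [hpa] at hadj hpanc
  · -- parent is a
    by_cases hb : Anc T r u₀ b
    · exact anc_trans hT.1 hpanc hb
    · exfalso
      have hnota : ¬ Anc T r u₀ a := fun h => hadj.ne (anc_antisymm hnum hpanc h)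
      have hdescS : ∀ w, Anc T r u₀ w → w ∈ S := by
        intro w hw
        refine side_chain hT hnum hScl hu₀ w hw ?_
        intro t h1 h2
        constructor
        · rintro rfl; exact hnota h1
        · rintro rfl; exact hb h1
      obtain ⟨p, q, hadjpq, hp, hpt, hq, hqt⟩ :=
        cross_G ctx.hG a {w | Anc T r u₀ w} (anc_refl u₀) (hSX u₀ hu₀).1 hb ctx.anb.symm
      have hp' : Anc T r u₀ p := hp
      have hq' : ¬ Anc T r u₀ q := hq
      rcases hT.2.2 _ _ hadjpq with h | h
      · exact hq' (anc_trans hT.1 hp' h)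
      · have hqu : Anc T r q u₀ := by
          rcases anc_comparable hnum h hp' with h2 | h2
          · exact h2
          · exact absurd h2 hq'
        have hqa : Anc T r q a :=
          anc_to_adj_anc hT.1 hnum hadj hpanc q hqu (fun he => hq' (by rw [he]; exact anc_refl u₀))
        have hqb : q ≠ b := by
          rintro rfl
          have := num_le_of_anc hnum hqa
          have := ctx.hab
          omega
        have hqS : q ∈ S := hScl p (hdescS p hp) q hadjpq hqt hqb
        have h1 := hmin q hqS
        have h2 := num_lt_of_panc hnum hqa hqt
        have h3 := num_lt_of_panc hnum hpanc hadj.ne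
        have h4 := num_le_of_anc hnum hqa
        have h5 := num_le_of_anc hnum hqu
        have := num_lt_of_panc hnum hqu (fun he => hq' (by rw [he]; exact anc_refl u₀))
        omega
  · -- parent is b
    by_cases ha : Anc T r u₀ a
    · exfalso
      have h1 := num_le_of_anc hnum (anc_trans hT.1 hpanc ha)
      have := ctx.hab
      omega
    · have hnotb : ¬ Anc T r u₀ b := fun h => hadj.ne (anc_antisymm hnum hpanc h)
      have hdescS : ∀ w, Anc T r u₀ w → w ∈ S := by
        intro w hw
        refine side_chain hT hnum hScl hu₀ w hw ?_
        intro t h1 h2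
        constructor
        · rintro rfl; exact ha h1
        · rintro rfl; exact hnotb h1
      obtain ⟨p, q, hadjpq, hp, hpt, hq, hqt⟩ :=
        cross_G ctx.hG b {w | Anc T r u₀ w} (anc_refl u₀) (hSX u₀ hu₀).2 ha ctx.anb
      have hp' : Anc T r u₀ p := hp
      have hq' : ¬ Anc T r u₀ q := hq
      rcases hT.2.2 _ _ hadjpq with h | h
      · exact absurd (anc_trans hT.1 hp' h) hq'
      · have hqu : Anc T r q u₀ := by
          rcases anc_comparable hnum h hp' with h2 | h2
          · exact h2
          · exact absurd h2 hq'
        have hqb : Anc T r q b :=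
          anc_to_adj_anc hT.1 hnum hadj hpanc q hqu (fun he => hq' (by rw [he]; exact anc_refl u₀))
        by_cases hqa : q = a
        · exact hqa ▸ hqb
        · exfalso
          have hqS : q ∈ S := hScl p (hdescS p hp) q hadjpq hqa hqt
          have h1 := hmin q hqS
          have := num_lt_of_panc hnum hqu (fun he => hq' (by rw [he]; exact anc_refl u₀))
          omega

lemma ancab : Anc T r a b := by
  by_cases hra : r = a
  · exact hra ▸ anc_root b
  · rcases ctx.hU r hra ctx.rb with h | h
    · exact ctx.ancab_aux ctx.hDne ctx.hDX ctx.clD (fun hr => ctx.hI r h hr)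
    · exact ctx.ancab_aux ctx.hCne ctx.hCX ctx.clC (fun hr => ctx.hI r hr h)

end SepCtx
end Main
section Main2
variable {V : Type*} [Fintype V] {G T : SimpleGraph V} {r : V} {num : V → ℕ}
  {lwpt1 lwpt2 : V → V} {a b : V} {C D : Set V}

namespace SepCtx
variable (ctx : SepCtx G T r num lwpt1 lwpt2 a b C D)
include ctx

lemma descC {v : V} (hva : ¬ Anc T r v a) (hvb : ¬ Anc T r v b) (hv : v ∈ C) :
    ∀ w, Anc T r v w → w ∈ C := by
  intro w hw
  refine side_chain ctx.hT ctx.hnum ctx.clC hv w hw ?_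
  intro t h1 h2
  exact ⟨fun he => hva (he ▸ h1), fun he => hvb (he ▸ h1)⟩

lemma descD {v : V} (hva : ¬ Anc T r v a) (hvb : ¬ Anc T r v b) (hv : v ∈ D) :
    ∀ w, Anc T r v w → w ∈ D := by
  intro w hw
  refine side_chain ctx.hT ctx.hnum ctx.clD hv w hw ?_
  intro t h1 h2
  exact ⟨fun he => hva (he ▸ h1), fun he => hvb (he ▸ h1)⟩

-- basic facts about a child of b
lemma child_b_facts {h : V} (hadj : T.Adj b h) (hanc : Anc T r b h) :
    num b < num h ∧ h ≠ a ∧ h ≠ b ∧ ¬ Anc T r h a ∧ ¬ Anc T r h b := by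
  have hnum := ctx.hnum
  have h1 : num b < num h := num_lt_of_panc hnum hanc hadj.ne
  have hab := ctx.hab
  refine ⟨h1, ?_, hadj.ne', ?_, ?_⟩
  · rintro rfl; omega
  · intro hc; have := num_le_of_anc hnum hc; omega
  · intro hc; exact hadj.ne (anc_antisymm hnum hanc hc)

lemma child_b_side {h : V} (hadj : T.Adj b h) (hanc : Anc T r b h) :
    (∀ w, Anc T r h w → w ∈ C) ∨ (∀ w, Anc T r h w → w ∈ D) := by
  obtain ⟨h1, h2, h3, h4, h5⟩ := ctx.child_b_facts hadj hanc
  rcases ctx.hU h h2 h3 with hh | hh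
  · exact Or.inl (ctx.descC h4 h5 hh)
  · exact Or.inr (ctx.descD h4 h5 hh)

lemma b_mem_L {h : V} (hadj : T.Adj b h) (hanc : Anc T r b h) : b ∈ Lset G T r h :=
  ⟨⟨hanc, hadj.ne⟩, h, anc_refl h, ctx.hT.2.1 hadj⟩

-- any proper ancestor of a child of b is an ancestor of b
lemma panc_child_b {h w : V} (hadj : T.Adj b h) (hanc : Anc T r b h)
    (hw : Anc T r w h) (hne : w ≠ h) : Anc T r w b :=
  anc_to_adj_anc ctx.hT.1 ctx.hnum hadj hanc w hw hne

-- if all of `Lset h ⊆ {a, b}` for a child h of b then lwpt1 h = a and lwpt2 h = b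
lemma lwpt_ab {h : V} (hadj : T.Adj b h) (hanc : Anc T r b h)
    (hsub : ∀ u ∈ Lset G T r h, u = a ∨ u = b) :
    lwpt1 h = a ∧ lwpt2 h = b := by
  obtain ⟨h1, h2, h3, h4, h5⟩ := ctx.child_b_facts hadj hanc
  obtain ⟨u, huL, hub⟩ := exists_L_avoid ctx.hG ctx.hT ctx.hnum h3 h4 ctx.anb
  have hua : u = a := by rcases hsub u huL with hh | hh; exacts [hh, absurd hh hub]
  have haL : a ∈ Lset G T r h := hua ▸ huL
  have hbL : b ∈ Lset G T r h := ctx.b_mem_L hadj hanc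
  exact lwpt_pair ctx.hnum haL hbL ctx.hab (by rintro z hz; simpa using hsub z hz)

-- crossing within the connected side C out of the subtree of a C-child h of b
lemma wit {h t : V} (hadj : T.Adj b h) (hanc : Anc T r b h)
    (hdesc : ∀ w, Anc T r h w → w ∈ C) (htC : t ∈ C) (ht : ¬ Anc T r h t) :
    ∃ w, w ∈ Lset G T r h ∧ w ∈ C ∧ Anc T r w b ∧ w ≠ b ∧ w ≠ a := by
  have hnum := ctx.hnum
  obtain ⟨p, q, hadjpq, hpC, hpK, hqC, hqK⟩ :=
    cross_conn ctx.hconn {w | Anc T r h w} (hdesc h (anc_refl h)) (anc_refl h) htC ht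
  have hp' : Anc T r h p := hpK
  have hq' : ¬ Anc T r h q := hqK
  rcases ctx.hT.2.2 _ _ hadjpq with hh | hh
  · exact absurd (anc_trans ctx.hT.1 hp' hh) hq'
  · have hqh : Anc T r q h := by
      rcases anc_comparable hnum hh hp' with h2 | h2
      · exact h2
      · exact absurd h2 hq'
    have hqhne : q ≠ h := fun he => hq' (by rw [he]; exact anc_refl h)
    have hqb : Anc T r q b := ctx.panc_child_b hadj hanc hqh hqhne
    refine ⟨q, ⟨⟨hqh, hqhne⟩, p, hp', hadjpq.symm⟩, hqC, hqb, (ctx.hCX q hqC).2, (ctx.hCX q hqC).1⟩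

-- abstract interval lemma for D ⊆ subtree of b split into child subtrees
lemma intervalD_abstract
    (hDb : ∀ u ∈ D, Anc T r b u ∧ u ≠ b)
    (hnomid : ∀ f h f', T.Adj b f → Anc T r b f → T.Adj b h → Anc T r b h →
      T.Adj b f' → Anc T r b f' →
      (∀ w, Anc T r f w → w ∈ D) → (∀ w, Anc T r h w → w ∈ C) →
      (∀ w, Anc T r f' w → w ∈ D) →
      num f < num h → num h < num f' → False) :
    IsIntervalIn num (Set.univ \ {a, b}) D := by
  have hnum := ctx.hnum
  have hT := ctx.hT
  constructor
  · intro u hu; exact memX.mpr (ctx.hDX u hu)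
  intro x hx z hz y hy hxy hyz
  obtain ⟨hbx, hxb⟩ := hDb x hx
  obtain ⟨hbz, hzb⟩ := hDb z hz
  obtain ⟨f, hf1, hf2, hf3⟩ := exists_child_toward hT.1 hnum hbx (Ne.symm hxb)
  obtain ⟨f', hf'1, hf'2, hf'3⟩ := exists_child_toward hT.1 hnum hbz (Ne.symm hzb)
  have hfD : ∀ w, Anc T r f w → w ∈ D := by
    rcases ctx.child_b_side hf1 hf2 with hh | hh
    · exact absurd (hh x hf3) (fun hc => ctx.hI x hc hx)
    · exact hh
  have hf'D : ∀ w, Anc T r f' w → w ∈ D := by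
    rcases ctx.child_b_side hf'1 hf'2 with hh | hh
    · exact absurd (hh z hf'3) (fun hc => ctx.hI z hc hz)
    · exact hh
  have hby : Anc T r b y := by
    refine anc_of_num hnum ?_ ?_
    · have := num_le_of_anc hnum (anc_trans hT.1 hf2 hf3)
      omega
    · have := (num_desc hnum hbz).2
      omega
  have hyb : y ≠ b := by
    have h1 := num_lt_of_panc hnum hf2 hf1.ne
    have h2 := num_le_of_anc hnum hf3
    intro he; rw [he] at hxy hyz; omega
  obtain ⟨h, hh1, hh2, hh3⟩ := exists_child_toward hT.1 hnum hby (Ne.symm hyb)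
  rcases ctx.child_b_side hh1 hh2 with hhC | hhD
  · exfalso
    have hfh : num f < num h := by
      rcases lt_trichotomy (num f) (num h) with hlt | heq | hgt
      · exact hlt
      · exfalso
        have he := hnum.1.1 heq
        exact ctx.hI x (hhC x (by rw [← he]; exact hf3)) hx
      · have := sibling_lt hT.1 hnum hh1 hh2 hf1 hf2 hgt hh3
        have := num_le_of_anc hnum hf3
        omega
    have hhf' : num h < num f' := by
      rcases lt_trichotomy (num h) (num f') with hlt | heq | hgt
      · exact hlt
      · exfalso
        have he := hnum.1.1 heq
        exact ctx.hI z (hhC z (by rw [he]; exact hf'3)) hz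
      · exfalso
        have := sibling_lt hT.1 hnum hf'1 hf'2 hh1 hh2 hgt hf'3
        have := num_le_of_anc hnum hh3
        omega
    exact hnomid f h f' hf1 hf2 hh1 hh2 hf'1 hf'2 hfD hhC hf'D hfh hhf'
  · exact hhD y hh3

end SepCtx
end Main2
section Main3
variable {V : Type*} [Fintype V] {G T : SimpleGraph V} {r : V} {num : V → ℕ}
  {lwpt1 lwpt2 : V → V} {a b : V} {C D : Set V}

namespace SepCtx
variable (ctx : SepCtx G T r num lwpt1 lwpt2 a b C D)
include ctx

-- Case (I)(i): r ∈ C and the child of a towards b is b itself or lies in C.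
-- Then everything outside the subtree of b is in C.
lemma hxc_case_i (hrC : r ∈ C) {a₁ : V} (ha1 : T.Adj a a₁) (ha1anc : Anc T r a a₁)
    (ha1b : Anc T r a₁ b) (ha1C : a₁ = b ∨ a₁ ∈ C) :
    ∀ u, u ≠ a → u ≠ b → ¬ Anc T r b u → u ∈ C := by
  have hnum := ctx.hnum
  have hT := ctx.hT
  suffices H : ∀ n, ∀ u, num u ≤ n → u ≠ a → u ≠ b → ¬ Anc T r b u → u ∈ C by
    intro u h1 h2 h3; exact H (num u) u le_rfl h1 h2 h3
  intro n
  induction n with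
  | zero => intro u hu _ _ _; have := one_le_num hnum u; omega
  | succ n ih =>
    intro u hu hua hub hbu
    by_cases hur : u = r
    · rwa [hur]
    obtain ⟨p, hadj, hpanc⟩ := exists_parent hT.1 hur
    have hplt : num p < num u := num_lt_of_panc hnum hpanc hadj.ne
    by_cases hpa : p = a
    · -- u is a child of a
      rw [hpa] at hadj hpanc hplt
      by_cases hua1 : u = a₁
      · rcases ha1C with hh | hh
        · exact absurd hua1 (hh ▸ hub)
        · rwa [hua1]
      · have hnub : ¬ Anc T r u b := by
          intro hc
          exact children_disjoint hT.1 hnum hadj hpanc ha1 ha1anc hua1 hc ha1b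
        have hnua : ¬ Anc T r u a := by
          intro hc
          have := num_le_of_anc hnum hc
          have := num_lt_of_panc hnum hpanc hadj.ne
          omega
        rcases ctx.hU u hua hub with hh | hh
        · exact hh
        · exfalso
          have hLa : ∀ w ∈ Lset G T r u, w = a := by
            intro w hw
            obtain ⟨⟨hwanc, hwne⟩, w', hw'anc, hw'adj⟩ := hw
            have hwa : Anc T r w a := anc_to_adj_anc hT.1 hnum hadj hpanc w hwanc hwne
            by_contra hwna
            have hw_lt : num w < num a := num_lt_of_panc hnum hwa hwna
            have hab := ctx.hab
            have hwb : w ≠ b := by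
              intro he; rw [he] at hw_lt; omega
            have hnbw : ¬ Anc T r b w := by
              intro hc; have := num_le_of_anc hnum hc; omega
            have hwC : w ∈ C := ih w (by omega) hwna hwb hnbw
            have hw'D : w' ∈ D := ctx.descD hnua hnub hh w' hw'anc
            exact ctx.hE w hwC w' hw'D hw'adj
          obtain ⟨w, hwL, hwa⟩ :=
            exists_L_avoid ctx.hG hT hnum hua hnub ctx.anb.symm
          exact hwa (hLa w hwL)
    · by_cases hpb : p = b
      · exact absurd (hpb ▸ hpanc) hbu
      · have hnbp : ¬ Anc T r b p := fun hc => hbu (anc_trans hT.1 hc hpanc)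
        have hpC : p ∈ C := ih p (by omega) hpa hpb hnbp
        exact ctx.clC p hpC u (hT.2.1 hadj) hua hub

lemma case_i (hrC : r ∈ C) {a₁ : V} (ha1 : T.Adj a a₁) (ha1anc : Anc T r a a₁)
    (ha1b : Anc T r a₁ b) (ha1C : a₁ = b ∨ a₁ ∈ C) :
    IsIntervalIn num (Set.univ \ {a, b}) D := by
  have hnum := ctx.hnum
  have hT := ctx.hT
  have hab := ctx.hab
  have HXC := ctx.hxc_case_i hrC ha1 ha1anc ha1b ha1C
  have hDb : ∀ u ∈ D, Anc T r b u ∧ u ≠ b := by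
    intro u hu
    obtain ⟨h1, h2⟩ := ctx.hDX u hu
    refine ⟨?_, h2⟩
    by_contra hc
    exact ctx.hI u (HXC u h1 h2 hc) hu
  -- every D-child of b has lowpoints (a, b)
  have hDch : ∀ f, T.Adj b f → Anc T r b f → (∀ w, Anc T r f w → w ∈ D) →
      lwpt1 f = a ∧ lwpt2 f = b := by
    intro f hf1 hf2 hfD
    refine ctx.lwpt_ab hf1 hf2 ?_
    intro w hw
    obtain ⟨⟨hwanc, hwne⟩, w', hw'anc, hw'adj⟩ := hw
    have hwb : Anc T r w b := ctx.panc_child_b hf1 hf2 hwanc hwne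
    by_contra hcon
    push_neg at hcon
    have hnbw : ¬ Anc T r b w := by
      intro hc; exact hcon.2 (anc_antisymm hnum hwb hc)
    have hwC : w ∈ C := HXC w hcon.1 hcon.2 hnbw
    exact ctx.hE w hwC w' (hfD w' hw'anc) hw'adj
  refine ctx.intervalD_abstract hDb ?_
  intro f h f' hf1 hf2 hh1 hh2 hf'1 hf'2 hfD hhC hf'D hfh hhf'
  obtain ⟨hlf1, hlf2⟩ := hDch f hf1 hf2 hfD
  obtain ⟨hlf'1, hlf'2⟩ := hDch f' hf'1 hf'2 hf'D
  have compat := hnum.2.2.2.2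
  rcases compat b f h ⟨hf1, hf2⟩ ⟨hh1, hh2⟩ hfh with hc1 | ⟨hc1, hc2⟩
  · -- num lwpt1 h < num lwpt1 f = num a
    rw [hlf1] at hc1
    rcases compat b h f' ⟨hh1, hh2⟩ ⟨hf'1, hf'2⟩ hhf' with hd1 | ⟨hd1, hd2⟩
    · rw [hlf'1] at hd1; omega
    · rw [hd1, hlf'1] at hc1; omega
  · -- lwpt1 h = a and num lwpt2 h ≥ num b
    rw [hlf1] at hc1
    rw [hlf2] at hc2
    have hhC' : h ∈ C := hhC h (anc_refl h)
    have hhr : ¬ Anc T r h r := by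
      intro hc
      have := anc_root_eq hnum hc
      have h1 := num_le_of_anc hnum (anc_root a)
      have h2 := num_lt_of_panc hnum hh2 hh1.ne
      rw [this] at h2
      omega
    obtain ⟨w, hwL, hwC, hwb, hwnb, hwna⟩ := ctx.wit hh1 hh2 hhC hrC hhr
    have hwlt : num w < num b := num_lt_of_panc hnum hwb hwnb
    have h1 := (lwpt1_min hnum hwL).2 w hwL
    rw [hc1] at hwna
    have h2 : num (lwpt1 h) < num w :=
      lt_of_le_of_ne h1 (fun he => hwna (hnum.1.1 he.symm))
    have h3 := (lwpt2_le hnum hwL h2).2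
    omega

end SepCtx
end Main3
section Main4
variable {V : Type*} [Fintype V] {G T : SimpleGraph V} {r : V} {num : V → ℕ}
  {lwpt1 lwpt2 : V → V} {a b : V} {C D : Set V}

lemma meet_construction (hT : IsNormalSpanningTree G T r)
    (hnum : CompatibleNumbering G T r num lwpt1 lwpt2) {a₁ z : V}
    (hz1 : Anc T r a₁ z) (hzb : ¬ Anc T r b z) (ha1b : Anc T r a₁ b)
    (hnumz : num b < num z) :
    ∃ m' c s, T.Adj m' c ∧ Anc T r m' c ∧ T.Adj m' s ∧ Anc T r m' s ∧
      Anc T r a₁ m' ∧ Anc T r m' b ∧ Anc T r c z ∧ Anc T r s b ∧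
      num s < num c ∧ ¬ Anc T r c b ∧ num a₁ ≤ num m' := by
  classical
  set CA := {t | Anc T r t z ∧ Anc T r t b} with hCA
  have hane : CA.Nonempty := ⟨a₁, hz1, ha1b⟩
  obtain ⟨m', hm', hmax⟩ := Set.exists_max_image CA num (Set.toFinite _) hane
  obtain ⟨hm'z, hm'b⟩ := hm'
  have ha1m' : Anc T r a₁ m' := by
    rcases anc_comparable hnum hz1 hm'z with hh | hh
    · exact hh
    · have h1 := num_le_of_anc hnum hh
      have h2 := hmax a₁ ⟨hz1, ha1b⟩
      have : m' = a₁ := hnum.1.1 (by omega)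
      rw [this]; exact anc_refl a₁
  have hm'ne_z : m' ≠ z := by
    rintro rfl
    have := num_le_of_anc hnum hm'b
    omega
  have hm'ne_b : m' ≠ b := by
    rintro rfl
    exact hzb hm'z
  obtain ⟨c, hc1, hc2, hc3⟩ := exists_child_toward hT.1 hnum hm'z hm'ne_z
  obtain ⟨s, hs1, hs2, hs3⟩ := exists_child_toward hT.1 hnum hm'b hm'ne_b
  have hncb : ¬ Anc T r c b := by
    intro hc
    have := hmax c ⟨hc3, hc⟩
    have := num_lt_of_panc hnum hc2 hc1.ne
    omega
  have hcs : c ≠ s := by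
    rintro rfl
    exact hncb hs3
  have hslt : num s < num c := by
    rcases lt_trichotomy (num s) (num c) with hh | hh | hh
    · exact hh
    · exact absurd (hnum.1.1 hh) (Ne.symm hcs)
    · exfalso
      have := sibling_lt hT.1 hnum hc1 hc2 hs1 hs2 hh hc3
      have := num_le_of_anc hnum hs3
      omega
  exact ⟨m', c, s, hc1, hc2, hs1, hs2, ha1m', hm'b, hc3, hs3, hslt, hncb,
    num_le_of_anc hnum ha1m'⟩

namespace SepCtx
variable (ctx : SepCtx G T r num lwpt1 lwpt2 a b C D)
include ctx

-- abstract interval lemma for the side containing the tree path from a₁ to b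
lemma intervalS_abstract {a₁ : V} (ha1b : Anc T r a₁ b) (S : Set V)
    (hSX : ∀ u ∈ S, u ≠ a ∧ u ≠ b)
    (hSsub : ∀ u ∈ S, Anc T r a₁ u)
    (hoff : ∀ u, Anc T r a₁ u → ¬ Anc T r b u → u ∈ S)
    (hchild : ∀ h, T.Adj b h → Anc T r b h →
      (∀ w, Anc T r h w → w ∈ S) ∨ (∀ w, Anc T r h w → w ∉ S))
    (horder : ∀ e f, T.Adj b e → Anc T r b e → T.Adj b f → Anc T r b f →
      (∀ w, Anc T r e w → w ∈ S) → (∀ w, Anc T r f w → w ∉ S) → num e < num f)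
    (hnotail : (∃ f, T.Adj b f ∧ Anc T r b f ∧ (∀ w, Anc T r f w → w ∉ S)) →
      ∀ z ∈ S, ¬ Anc T r b z → num z < num b) :
    IsIntervalIn num (Set.univ \ {a, b}) S := by
  have hnum := ctx.hnum
  have hT := ctx.hT
  constructor
  · intro u hu; exact memX.mpr (hSX u hu)
  intro x hx z hz y hy hxy hyz
  have hy' := memX.mp hy
  have ha1y : Anc T r a₁ y := by
    refine anc_of_num hnum ?_ ?_
    · have := num_le_of_anc hnum (hSsub x hx)
      omega
    · have := (num_desc hnum (hSsub z hz)).2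
      omega
  by_cases hby : Anc T r b y
  · obtain ⟨h, hh1, hh2, hh3⟩ := exists_child_toward hT.1 hnum hby (Ne.symm hy'.2)
    rcases hchild h hh1 hh2 with hhS | hhS
    · exact hhS y hh3
    · exfalso
      have hylb : num b < num y :=
        lt_of_lt_of_le (num_lt_of_panc hnum hh2 hh1.ne) (num_le_of_anc hnum hh3)
      by_cases hbz : Anc T r b z
      · have hzb : z ≠ b := (hSX z hz).2
        obtain ⟨e, he1, he2, he3⟩ := exists_child_toward hT.1 hnum hbz (Ne.symm hzb)
        have heS : ∀ w, Anc T r e w → w ∈ S := by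
          rcases hchild e he1 he2 with hh | hh
          · exact hh
          · exact absurd hz (hh z he3)
        have := horder e h he1 he2 hh1 hh2 heS hhS
        have := sibling_lt hT.1 hnum he1 he2 hh1 hh2 this he3
        have := num_le_of_anc hnum hh3
        omega
      · have := hnotail ⟨h, hh1, hh2, hhS⟩ z hz hbz
        omega
  · exact hoff y ha1y hby

end SepCtx
end Main4
section Main5
variable {V : Type*} [Fintype V] {G T : SimpleGraph V} {r : V} {num : V → ℕ}
  {lwpt1 lwpt2 : V → V} {a b : V} {C D : Set V}

namespace SepCtx
variable (ctx : SepCtx G T r num lwpt1 lwpt2 a b C D)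
include ctx

lemma case_ii (hrC : r ∈ C) {a₁ : V} (ha1 : T.Adj a a₁) (ha1anc : Anc T r a a₁)
    (ha1b : Anc T r a₁ b) (ha1D : a₁ ∈ D) :
    IsIntervalIn num (Set.univ \ {a, b}) D := by
  have hnum := ctx.hnum
  have hT := ctx.hT
  have hab := ctx.hab
  have haa1 : num a < num a₁ := num_lt_of_panc hnum ha1anc ha1.ne
  -- proper ancestors of a are in C
  have pancaC : ∀ w, Anc T r w a → w ≠ a → w ∈ C := by
    intro w hw hwa
    have hwnum := num_lt_of_panc hnum hw hwa
    refine side_chain hT hnum ctx.clC hrC w (anc_root w) ?_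
    intro t h1 h2
    constructor
    · rintro rfl
      exact hwa (anc_antisymm hnum hw h2)
    · rintro rfl
      have := num_le_of_anc hnum (anc_trans hT.1 h2 hw)
      omega
  -- vertices outside the subtree of a are in C
  have hXdescaC : ∀ u, u ≠ a → ¬ Anc T r a u → u ∈ C := by
    intro u hua hau
    refine side_chain hT hnum ctx.clC hrC u (anc_root u) ?_
    intro t h1 h2
    constructor
    · rintro rfl; exact hau h2
    · rintro rfl
      exact hau (anc_trans hT.1 (ctx.ancab) h2)
  -- subtrees of other children of a are in C
  have hotherC : ∀ c', T.Adj a c' → Anc T r a c' → ¬ Anc T r c' b →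
      ∀ w, Anc T r c' w → w ∈ C := by
    intro c' hc'1 hc'2 hc'b
    have hc'a : ¬ Anc T r c' a := by
      intro hc
      have := num_le_of_anc hnum hc
      have := num_lt_of_panc hnum hc'2 hc'1.ne
      omega
    have hc'nb : c' ≠ b := fun he => hc'b (by rw [he] at hc'b ⊢; exact anc_refl b)
    rcases ctx.hU c' hc'1.ne' hc'nb with hh | hh
    · exact ctx.descC hc'a hc'b hh
    · exfalso
      have hLa : ∀ w ∈ Lset G T r c', w = a := by
        intro w hw
        obtain ⟨⟨hwanc, hwne⟩, w', hw'anc, hw'adj⟩ := hw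
        have hwa : Anc T r w a := anc_to_adj_anc hT.1 hnum hc'1 hc'2 w hwanc hwne
        by_contra hwna
        have hwC : w ∈ C := pancaC w hwa hwna
        exact ctx.hE w hwC w' (ctx.descD hc'a hc'b hh w' hw'anc) hw'adj
      obtain ⟨w, hwL, hwa⟩ :=
        exists_L_avoid ctx.hG hT hnum hc'1.ne' hc'b ctx.anb.symm
      exact hwa (hLa w hwL)
  -- uniqueness: any child of a whose subtree contains b equals a₁
  have huniq : ∀ c'', T.Adj a c'' → Anc T r a c'' → Anc T r c'' b → c'' = a₁ := by
    intro c'' h1 h2 h3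
    by_contra hne
    exact children_disjoint hT.1 hnum h1 h2 ha1 ha1anc hne h3 ha1b
  -- D is inside the subtree of a₁
  have hDsubA1 : ∀ u ∈ D, Anc T r a₁ u := by
    intro u hu
    obtain ⟨hua, hub⟩ := ctx.hDX u hu
    have hau : Anc T r a u := by
      by_contra hc
      exact ctx.hI u (hXdescaC u hua hc) hu
    obtain ⟨c'', h1, h2, h3⟩ := exists_child_toward hT.1 hnum hau (Ne.symm hua)
    by_cases hcb : Anc T r c'' b
    · have := huniq c'' h1 h2 hcb
      rwa [this] at h3
    · exact absurd (hotherC c'' h1 h2 hcb u h3) (fun hc => ctx.hI u hc hu)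
  -- the subtree of a₁ off the subtree of b is in D
  have hoffD : ∀ u, Anc T r a₁ u → ¬ Anc T r b u → u ∈ D := by
    intro u h1 h2
    refine side_chain hT hnum ctx.clD ha1D u h1 ?_
    intro t ht1 ht2
    constructor
    · rintro rfl
      have := num_le_of_anc hnum ht1
      omega
    · rintro rfl; exact h2 ht2
  -- D-children of b have lwpt1 ≥ a
  have hDchild_ge : ∀ f, T.Adj b f → Anc T r b f → (∀ w, Anc T r f w → w ∈ D) →
      num a ≤ num (lwpt1 f) := by
    intro f hf1 hf2 hfD
    have hbL : b ∈ Lset G T r f := ctx.b_mem_L hf1 hf2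
    have hall : ∀ w ∈ Lset G T r f, num a ≤ num w := by
      intro w hw
      obtain ⟨⟨hwanc, hwne⟩, w', hw'anc, hw'adj⟩ := hw
      have hwb : Anc T r w b := ctx.panc_child_b hf1 hf2 hwanc hwne
      by_cases hwa : w = a
      · rw [hwa]
      by_cases hwisb : w = b
      · rw [hwisb]; omega
      have hwD : w ∈ D := by
        rcases ctx.hU w hwa hwisb with hh | hh
        · exact absurd hw'adj (ctx.hE w hh w' (hfD w' hw'anc))
        · exact hh
      rcases anc_comparable hnum hwb (ctx.ancab) with hh | hh
      · exact absurd (pancaC w hh hwa) (fun hc => ctx.hI w hc hwD)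
      · exact num_le_of_anc hnum hh
    exact hall _ (lwpt1_min hnum hbL).1
  -- C-children of b have lwpt1 < a
  have hCchild_lt : ∀ e, T.Adj b e → Anc T r b e → (∀ w, Anc T r e w → w ∈ C) →
      num (lwpt1 e) < num a := by
    intro e he1 he2 heC
    have her : ¬ Anc T r e r := by
      intro hc
      have he := anc_root_eq hnum hc
      have h1 := num_le_of_anc hnum (anc_root a)
      have h2 := num_lt_of_panc hnum he2 he1.ne
      rw [he] at h2
      omega
    obtain ⟨w, hwL, hwC, hwb, hwnb, hwna⟩ := ctx.wit he1 he2 heC hrC her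
    have hwlta : num w < num a := by
      rcases anc_comparable hnum hwb (ctx.ancab) with hh | hh
      · exact num_lt_of_panc hnum hh hwna
      · exfalso
        obtain ⟨c'', h1, h2, h3⟩ := exists_child_toward hT.1 hnum hh (Ne.symm hwna)
        have hc''b : Anc T r c'' b := anc_trans hT.1 h3 hwb
        have := huniq c'' h1 h2 hc''b
        rw [this] at h3
        have hnbw : ¬ Anc T r b w := by
          intro hc
          exact hwnb (anc_antisymm hnum hwb hc)
        exact ctx.hI w hwC (hoffD w h3 hnbw)
    have := (lwpt1_min hnum hwL).2 w hwL
    omega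
  -- conversion: a child of b whose subtree avoids D is a C-child
  have hconv : ∀ f, T.Adj b f → Anc T r b f → (∀ w, Anc T r f w → w ∉ D) →
      ∀ w, Anc T r f w → w ∈ C := by
    intro f h1 h2 h3
    rcases ctx.child_b_side h1 h2 with hh | hh
    · exact hh
    · exact absurd (hh f (anc_refl f)) (h3 f (anc_refl f))
  refine ctx.intervalS_abstract ha1b D ctx.hDX hDsubA1 hoffD ?_ ?_ ?_
  · -- hchild
    intro h h1 h2
    rcases ctx.child_b_side h1 h2 with hh | hh
    · exact Or.inr (fun w hw hc => ctx.hI w (hh w hw) hc)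
    · exact Or.inl hh
  · -- horder : D-child before C-child
    intro e f he1 he2 hf1 hf2 heD hfnD
    have hfC := hconv f hf1 hf2 hfnD
    have hge := hDchild_ge e he1 he2 heD
    have hlt := hCchild_lt f hf1 hf2 hfC
    have hne : e ≠ f := by
      rintro rfl
      exact hfnD e (anc_refl e) (heD e (anc_refl e))
    rcases lt_trichotomy (num e) (num f) with hh | hh | hh
    · exact hh
    · exact absurd (hnum.1.1 hh) hne
    · exfalso
      rcases hnum.2.2.2.2 b f e ⟨hf1, hf2⟩ ⟨he1, he2⟩ hh with hc | ⟨hc, -⟩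
      · omega
      · rw [hc] at hlt; omega
  · -- no tail
    rintro ⟨f, hf1, hf2, hfnD⟩ z hz hbz
    have hfC := hconv f hf1 hf2 hfnD
    by_contra hge
    push_neg at hge
    have haz : Anc T r a₁ z := hDsubA1 z hz
    have hzb : num b < num z := by
      have : z ≠ b := (ctx.hDX z hz).2
      rcases lt_or_eq_of_le hge with hh | hh
      · exact hh
      · exact absurd (hnum.1.1 hh) (Ne.symm this)
    obtain ⟨m', c, s, hc1, hc2, hs1, hs2, ha1m', hm'b, hcz, hsb, hslt, hncb, hm'ge⟩ :=
      meet_construction hT hnum haz hbz ha1b hzb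
    have hnum_c : num a < num c := by
      have := num_lt_of_panc hnum hc2 hc1.ne
      omega
    have hnca : ¬ Anc T r c a := by
      intro hc
      have := num_le_of_anc hnum hc
      omega
    have hcD : ∀ w, Anc T r c w → w ∈ D := by
      have hcb : c ≠ b := fun he => hncb (by rw [he]; exact anc_refl b)
      have hca : c ≠ a := fun he => by rw [he] at hnum_c; omega
      rcases ctx.hU c hca hcb with hh | hh
      · exact absurd (ctx.descC hnca hncb hh z hcz) (fun hc => ctx.hI z hc hz)
      · exact ctx.descD hnca hncb hh
    -- lwpt1 c ≥ a
    have hgec : num a ≤ num (lwpt1 c) := by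
      have hm'L : m' ∈ Lset G T r c := ⟨⟨hc2, hc1.ne⟩, c, anc_refl c, ctx.hT.2.1 hc1⟩
      have hall : ∀ w ∈ Lset G T r c, num a ≤ num w := by
        intro w hw
        obtain ⟨⟨hwanc, hwne⟩, w', hw'anc, hw'adj⟩ := hw
        have hwm : Anc T r w m' := anc_to_adj_anc hT.1 hnum hc1 hc2 w hwanc hwne
        have hwb : Anc T r w b := anc_trans hT.1 hwm hm'b
        by_cases hwa : w = a
        · rw [hwa]
        by_cases hwisb : w = b
        · rw [hwisb]; omega
        have hwD : w ∈ D := by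
          rcases ctx.hU w hwa hwisb with hh | hh
          · exact absurd hw'adj (ctx.hE w hh w' (hcD w' hw'anc))
          · exact hh
        rcases anc_comparable hnum hwb (ctx.ancab) with hh | hh
        · exact absurd (pancaC w hh hwa) (fun hc => ctx.hI w hc hwD)
        · exact num_le_of_anc hnum hh
      exact hall _ (lwpt1_min hnum hm'L).1
    -- lwpt1 s < a via the C-child f
    have hlts : num (lwpt1 s) < num a := by
      have hlf := hCchild_lt f hf1 hf2 hfC
      have hbLf : b ∈ Lset G T r f := ctx.b_mem_L hf1 hf2
      obtain ⟨⟨hanc, hne⟩, w', hw'1, hw'2⟩ := (lwpt1_min hnum hbLf).1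
      have hsw' : Anc T r s w' :=
        anc_trans hT.1 (anc_trans hT.1 hsb hf2) hw'1
      have hlw' : Anc T r (lwpt1 f) w' := anc_trans hT.1 hanc hw'1
      have hnums : num a < num s := by
        have := num_lt_of_panc hnum hs2 hs1.ne
        omega
      have hps : Anc T r (lwpt1 f) s := by
        rcases anc_comparable hnum hlw' hsw' with hh | hh
        · exact hh
        · exfalso
          have := num_le_of_anc hnum hh
          omega
      have hmem : lwpt1 f ∈ Lset G T r s :=
        ⟨⟨hps, fun he => by rw [he] at hlf; omega⟩, w', hsw', hw'2⟩
      have := (lwpt1_min hnum hmem).2 _ hmem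
      have := (lwpt1_min hnum hmem).2 _ hmem
      have h2 := (lwpt1_min hnum hmem).2 (lwpt1 f) hmem
      omega
    rcases hnum.2.2.2.2 m' s c ⟨hs1, hs2⟩ ⟨hc1, hc2⟩ hslt with hc | ⟨hc, -⟩
    · omega
    · rw [hc] at hlts; omega

end SepCtx
end Main5
section Main6
variable {V : Type*} [Fintype V] {G T : SimpleGraph V} {r : V} {num : V → ℕ}
  {lwpt1 lwpt2 : V → V} {a b : V} {C D : Set V}

namespace SepCtx
variable (ctx : SepCtx G T r num lwpt1 lwpt2 a b C D)
include ctx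

-- in case IIb (C rooted at the child m of a with b in the subtree of m):
-- every C-child of b precedes every D-child of b.
lemma order_iib {m : V} (hmC : m ∈ C) (hroot : ∀ u ∈ C, Anc T r m u)
    (hmb : Anc T r m b) (hnma : num a < num m)
    (hoffC : ∀ u, Anc T r m u → ¬ Anc T r b u → u ∈ C)
    (huniqm : ∀ c'', T.Adj a c'' → Anc T r a c'' → Anc T r c'' b → c'' = m) :
    ∀ e f, T.Adj b e → Anc T r b e → T.Adj b f → Anc T r b f →
      (∀ w, Anc T r e w → w ∈ C) → (∀ w, Anc T r f w → w ∈ D) → num e < num f := by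
  have hnum := ctx.hnum
  have hT := ctx.hT
  have hab := ctx.hab
  intro e f he1 he2 hf1 hf2 heC hfD
  -- (α) : lwpt1 of a C-child is ≥ a
  have hCge : num a ≤ num (lwpt1 e) := by
    have hbL : b ∈ Lset G T r e := ctx.b_mem_L he1 he2
    have hall : ∀ w ∈ Lset G T r e, num a ≤ num w := by
      intro w hw
      obtain ⟨⟨hwanc, hwne⟩, w', hw'anc, hw'adj⟩ := hw
      by_cases hwa : w = a
      · rw [hwa]
      by_cases hwisb : w = b
      · rw [hwisb]; omega
      rcases ctx.hU w hwa hwisb with hh | hh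
      · have := num_le_of_anc hnum (hroot w hh)
        omega
      · exact absurd hw'adj.symm (ctx.hE w' (heC w' hw'anc) w hh)
    exact hall _ (lwpt1_min hnum hbL).1
  -- (γ) : if lwpt1 e = a then lwpt2 e < b
  have hgamma : lwpt1 e = a → num (lwpt2 e) < num b := by
    intro hea
    have hem : ¬ Anc T r e m := by
      intro hc
      have h1 := num_le_of_anc hnum hc
      have h2 := num_le_of_anc hnum hmb
      have h3 := num_lt_of_panc hnum he2 he1.ne
      omega
    obtain ⟨w, hwL, hwC, hwb, hwnb, hwna⟩ := ctx.wit he1 he2 heC hmC hem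
    have hwlt : num w < num b := num_lt_of_panc hnum hwb hwnb
    have h1 := (lwpt1_min hnum hwL).2 w hwL
    rw [hea] at h1
    have h2 : num (lwpt1 e) < num w := by
      rw [hea]
      exact lt_of_le_of_ne h1 (fun he' => hwna (hnum.1.1 he'.symm))
    have h3 := (lwpt2_le hnum hwL h2).2
    omega
  -- dichotomy for the D-child f
  have hdich : num (lwpt1 f) < num a ∨ (lwpt1 f = a ∧ lwpt2 f = b) := by
    by_cases hex : ∃ w ∈ Lset G T r f, w ≠ a ∧ w ≠ b
    · obtain ⟨w, hwL, hwa, hwb⟩ := hex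
      left
      obtain ⟨⟨hwanc, hwne⟩, w', hw'anc, hw'adj⟩ := id hwL
      have hwD : w ∈ D := by
        rcases ctx.hU w hwa hwb with hh | hh
        · exact absurd hw'adj (ctx.hE w hh w' (hfD w' hw'anc))
        · exact hh
      have hwab : Anc T r w b := ctx.panc_child_b hf1 hf2 hwanc hwne
      have hwlt : num w < num a := by
        rcases anc_comparable hnum hwab (ctx.ancab) with hh | hh
        · exact num_lt_of_panc hnum hh hwa
        · exfalso
          obtain ⟨c'', h1, h2, h3⟩ := exists_child_toward hT.1 hnum hh (Ne.symm hwa)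
          have := huniqm c'' h1 h2 (anc_trans hT.1 h3 hwab)
          rw [this] at h3
          have hnbw : ¬ Anc T r b w := by
            intro hc
            exact hwb (anc_antisymm hnum hwab hc)
          exact ctx.hI w (hoffC w h3 hnbw) hwD
      have := (lwpt1_min hnum hwL).2 w hwL
      omega
    · push_neg at hex
      right
      exact ctx.lwpt_ab hf1 hf2 (fun u hu => by
        by_contra hcon
        push_neg at hcon
        exact hcon.2 (hex u hu hcon.1))
  have hne : e ≠ f := by
    rintro rfl
    exact ctx.hI e (heC e (anc_refl e)) (hfD e (anc_refl e))
  rcases lt_trichotomy (num e) (num f) with hh | hh | hh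
  · exact hh
  · exact absurd (hnum.1.1 hh) hne
  · exfalso
    rcases hnum.2.2.2.2 b f e ⟨hf1, hf2⟩ ⟨he1, he2⟩ hh with hc | ⟨hc, hc2⟩
    · rcases hdich with hd | ⟨hd, -⟩
      · omega
      · rw [hd] at hc; omega
    · rcases hdich with hd | ⟨hd1, hd2⟩
      · rw [hc] at hd; omega
      · rw [hc] at hd1
        rw [hd2] at hc2
        have := hgamma hd1
        omega

end SepCtx
end Main6
section Main7
variable {V : Type*} [Fintype V] {G T : SimpleGraph V} {r : V} {num : V → ℕ}
  {lwpt1 lwpt2 : V → V} {a b : V} {C D : Set V}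

namespace SepCtx
variable (ctx : SepCtx G T r num lwpt1 lwpt2 a b C D)
include ctx

lemma case_II (hrC : r ∉ C) :
    IsIntervalIn num (Set.univ \ {a, b}) C ∨ IsIntervalIn num (Set.univ \ {a, b}) D := by
  have hnum := ctx.hnum
  have hT := ctx.hT
  have hab := ctx.hab
  obtain ⟨m, hmC, hmin⟩ := Set.exists_min_image C num (Set.toFinite _) ctx.hCne
  have hroot : ∀ u ∈ C, Anc T r m u := conn_min_anc hT hnum ctx.hconn hmC hmin
  have hmr : m ≠ r := fun he => hrC (he ▸ hmC)
  obtain ⟨ma, mb⟩ := ctx.hCX m hmC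
  obtain ⟨p₀, hp1, hp2⟩ := exists_parent hT.1 hmr
  have hplt : num p₀ < num m := num_lt_of_panc hnum hp2 hp1.ne
  have hp₀ : p₀ = a ∨ p₀ = b := by
    by_contra hcon
    push_neg at hcon
    have : p₀ ∈ C := ctx.clC m hmC p₀ (hT.2.1 hp1).symm hcon.1 hcon.2
    have := hmin p₀ this
    omega
  -- helper: if the subtree of m misses b, then C is exactly that subtree: interval
  have heasy : ¬ Anc T r m a → ¬ Anc T r m b → IsIntervalIn num (Set.univ \ {a, b}) C := by
    intro hma hmb
    have hdesc : ∀ w, Anc T r m w → w ∈ C := ctx.descC hma hmb hmC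
    constructor
    · intro u hu; exact memX.mpr (ctx.hCX u hu)
    intro x hx z hz y hy hxy hyz
    refine hdesc y (anc_of_num hnum ?_ ?_)
    · have := num_le_of_anc hnum (hroot x hx); omega
    · have := (num_desc hnum (hroot z hz)).2; omega
  have hmna : ¬ Anc T r m a := by
    intro hc
    have := num_le_of_anc hnum hc
    rcases hp₀ with rfl | rfl <;> omega
  rcases hp₀ with hpa | hpb
  swap
  · -- parent of m is b : easy case
    left
    refine heasy hmna ?_
    rw [hpb] at hp2 hp1
    exact fun hc => hp1.ne (anc_antisymm hnum hp2 hc)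
  rw [hpa] at hp1 hp2 hplt
  by_cases hmb : Anc T r m b
  swap
  · exact Or.inl (heasy hmna hmb)
  -- Case IIb : m = a₁
  have hmbne : m ≠ b := mb
  have huniqm : ∀ c'', T.Adj a c'' → Anc T r a c'' → Anc T r c'' b → c'' = m := by
    intro c'' h1 h2 h3
    by_contra hne
    exact children_disjoint hT.1 hnum h1 h2 hp1 hp2 hne h3 hmb
  have hoffC : ∀ u, Anc T r m u → ¬ Anc T r b u → u ∈ C := by
    intro u h1 h2
    refine side_chain hT hnum ctx.clC hmC u h1 ?_
    intro t ht1 ht2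
    constructor
    · rintro rfl
      have := num_le_of_anc hnum ht1
      omega
    · rintro rfl; exact h2 ht2
  have horder := ctx.order_iib hmC hroot hmb hplt hoffC huniqm
  by_cases hP : ∃ p ∈ D, ¬ Anc T r b p
  · -- C is an interval
    left
    -- no-tail via the crossing argument
    have hnotail : ∀ z ∈ C, ¬ Anc T r b z → num z < num b := by
      intro z hz hbz
      by_contra hge
      push_neg at hge
      have hzb : num b < num z :=
        lt_of_le_of_ne hge (fun he => (ctx.hCX z hz).2 (hnum.1.1 he.symm))
      obtain ⟨m', c, s, hc1, hc2, hs1, hs2, ham', hm'b, hcz, hsb, hslt, hncb, hm'ge⟩ :=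
        meet_construction hT hnum (hroot z hz) hbz hmb hzb
      have hnumc : num a < num c := by
        have := num_lt_of_panc hnum hc2 hc1.ne
        omega
      have hnums : num a < num s := by
        have := num_lt_of_panc hnum hs2 hs1.ne
        omega
      have hnca : ¬ Anc T r c a := by
        intro hc; have := num_le_of_anc hnum hc; omega
      have hcC : ∀ w, Anc T r c w → w ∈ C := by
        have hcb : c ≠ b := fun he => hncb (by rw [he]; exact anc_refl b)
        have hca : c ≠ a := fun he => by rw [he] at hnumc; omega
        rcases ctx.hU c hca hcb with hh | hh
        · exact ctx.descC hnca hncb hh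
        · exact absurd (ctx.descD hnca hncb hh z hcz) (fun hc => ctx.hI z hz hc)
      -- lwpt1 c ≥ a
      have hgec : num a ≤ num (lwpt1 c) := by
        have hm'L : m' ∈ Lset G T r c := ⟨⟨hc2, hc1.ne⟩, c, anc_refl c, ctx.hT.2.1 hc1⟩
        have hall : ∀ w ∈ Lset G T r c, num a ≤ num w := by
          intro w hw
          obtain ⟨⟨hwanc, hwne⟩, w', hw'anc, hw'adj⟩ := hw
          by_cases hwa : w = a
          · rw [hwa]
          by_cases hwisb : w = b
          · rw [hwisb]; omega
          rcases ctx.hU w hwa hwisb with hh | hh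
          · have := num_le_of_anc hnum (hroot w hh)
            omega
          · exact absurd hw'adj.symm (ctx.hE w' (hcC w' hw'anc) w hh)
        exact hall _ (lwpt1_min hnum hm'L).1
      -- lwpt1 s < a via the crossing from D
      have hlts : num (lwpt1 s) < num a := by
        obtain ⟨p, hpD, hpb⟩ := hP
        obtain ⟨p', q', hadjpq, hp'K, hp'a, hq'K, hq'a⟩ :=
          cross_G ctx.hG a {x | x ∈ D ∧ ¬ Anc T r b x} ⟨hpD, hpb⟩ (ctx.hDX p hpD).1
            (fun hc => hc.2 (anc_refl b)) ctx.anb.symm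
        obtain ⟨hp'D, hp'nb⟩ := hp'K
        have hq'b : Anc T r b q' := by
          by_contra hc
          rcases ctx.hU q' hq'a (fun he => hc (by rw [he]; exact anc_refl b)) with hh | hh
          · exact ctx.hE q' hh p' hp'D hadjpq.symm
          · exact hq'K ⟨hh, hc⟩
        have hp'q' : Anc T r p' q' := by
          rcases hT.2.2 _ _ hadjpq with hh | hh
          · exact hh
          · exact absurd (anc_trans hT.1 hq'b hh) hp'nb
        have hp'b : Anc T r p' b := by
          rcases anc_comparable hnum hp'q' hq'b with hh | hh
          · exact hh
          · exact absurd hh hp'nb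
        have hp'lta : num p' < num a := by
          rcases anc_comparable hnum hp'b ctx.ancab with hh | hh
          · exact num_lt_of_panc hnum hh hp'a
          · exfalso
            obtain ⟨c'', h1, h2, h3⟩ := exists_child_toward hT.1 hnum hh (Ne.symm hp'a)
            have := huniqm c'' h1 h2 (anc_trans hT.1 h3 hp'b)
            rw [this] at h3
            exact ctx.hI p' (hoffC p' h3 hp'nb) hp'D
        have hsq' : Anc T r s q' := anc_trans hT.1 hsb hq'b
        have hp's : Anc T r p' s := by
          rcases anc_comparable hnum hp'q' hsq' with hh | hh
          · exact hh
          · exfalso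
            have := num_le_of_anc hnum hh
            omega
        have hmem : p' ∈ Lset G T r s :=
          ⟨⟨hp's, fun he => by rw [he] at hp'lta; omega⟩, q', hsq', hadjpq⟩
        have := (lwpt1_min hnum hmem).2 p' hmem
        omega
      rcases hnum.2.2.2.2 m' s c ⟨hs1, hs2⟩ ⟨hc1, hc2⟩ hslt with hc | ⟨hc, -⟩
      · omega
      · rw [hc] at hlts; omega
    refine ctx.intervalS_abstract hmb C ctx.hCX (fun u hu => hroot u hu) hoffC ?_ ?_ ?_
    · intro h h1 h2
      rcases ctx.child_b_side h1 h2 with hh | hh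
      · exact Or.inl hh
      · exact Or.inr (fun w hw hc => ctx.hI w hc (hh w hw))
    · intro e f he1 he2 hf1 hf2 heC hfnC
      refine horder e f he1 he2 hf1 hf2 heC ?_
      rcases ctx.child_b_side hf1 hf2 with hh | hh
      · exact absurd (hh f (anc_refl f)) (hfnC f (anc_refl f))
      · exact hh
    · intro _ z hz hbz
      exact hnotail z hz hbz
  · -- D ⊆ subtree of b : D is an interval
    right
    push_neg at hP
    have hDb : ∀ u ∈ D, Anc T r b u ∧ u ≠ b := fun u hu => ⟨hP u hu, (ctx.hDX u hu).2⟩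
    refine ctx.intervalD_abstract hDb ?_
    intro f h f' hf1 hf2 hh1 hh2 hf'1 hf'2 hfD hhC hf'D hfh hhf'
    have := horder h f hh1 hh2 hf1 hf2 hhC hfD
    omega

end SepCtx
end Main7
section Main8
variable {V : Type*} [Fintype V] {G T : SimpleGraph V} {r : V} {num : V → ℕ}
  {lwpt1 lwpt2 : V → V} {a b : V} {C D : Set V}

namespace SepCtx
variable (ctx : SepCtx G T r num lwpt1 lwpt2 a b C D)
include ctx

lemma main :
    IsIntervalIn num (Set.univ \ {a, b}) C ∨ IsIntervalIn num (Set.univ \ {a, b}) D := by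
  have hnum := ctx.hnum
  have hT := ctx.hT
  by_cases hrC : r ∈ C
  · right
    obtain ⟨a₁, h1, h2, h3⟩ := exists_child_toward hT.1 hnum ctx.ancab ctx.anb
    by_cases ha1D : a₁ ∈ D
    · exact ctx.case_ii hrC h1 h2 h3 ha1D
    · refine ctx.case_i hrC h1 h2 h3 ?_
      by_cases ha1b : a₁ = b
      · exact Or.inl ha1b
      · rcases ctx.hU a₁ h1.ne' ha1b with hh | hh
        · exact Or.inr hh
        · exact absurd hh ha1D
  · exact ctx.case_II hrC

end SepCtx
end Main8
/-- For a half-connected 2-separation `(A,B)` of a 2-connected graph with a compatible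
numbering, the proper sides `A \ B` and `B \ A` are cyclic intervals of the remaining
vertices `V(G) \ {a, b}`. -/
theorem halfConnected_cyclic_intervals [Fintype V] (G T : SimpleGraph V) (r : V)
    (num : V → ℕ) (lwpt1 lwpt2 : V → V)
    (hG : TwoConnected G) (hT : IsNormalSpanningTree G T r)
    (hnum : CompatibleNumbering G T r num lwpt1 lwpt2)
    (A B : Set V) (a b : V)
    (hsep : IsSeparation2 G A B) (hhc : HalfConnected G A B)
    (hAB : A ∩ B = {a, b}) (hab : num a < num b) :
    IsCyclicIntervalIn num (Set.univ \ {a, b}) (A \ B) ∧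
      IsCyclicIntervalIn num (Set.univ \ {a, b}) (B \ A) := by
  obtain ⟨⟨hunion, hAne, hBne, hnoedge⟩, -⟩ := hsep
  have haAB : a ∈ A ∩ B := by rw [hAB]; exact Set.mem_insert a {b}
  have hbAB : b ∈ A ∩ B := by rw [hAB]; exact Set.mem_insert_of_mem a rfl
  have hCX : ∀ u ∈ A \ B, u ≠ a ∧ u ≠ b := by
    intro u hu
    constructor
    · rintro rfl; exact hu.2 haAB.2
    · rintro rfl; exact hu.2 hbAB.2
  have hDX : ∀ u ∈ B \ A, u ≠ a ∧ u ≠ b := by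
    intro u hu
    constructor
    · rintro rfl; exact hu.2 haAB.1
    · rintro rfl; exact hu.2 hbAB.1
  have hU : ∀ u : V, u ≠ a → u ≠ b → u ∈ A \ B ∨ u ∈ B \ A := by
    intro u hua hub
    have huAB : u ∈ A ∪ B := by rw [hunion]; trivial
    have hni : u ∉ A ∩ B := by
      rw [hAB]
      rintro (rfl | rfl)
      · exact hua rfl
      · exact hub rfl
    rcases huAB with h | h
    · exact Or.inl ⟨h, fun hB => hni ⟨h, hB⟩⟩
    · exact Or.inr ⟨h, fun hA => hni ⟨hA, h⟩⟩
  have hI : ∀ u, u ∈ A \ B → u ∈ B \ A → False := fun u h1 h2 => h1.2 h2.1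
  have hcompl1 : (Set.univ \ {a, b} : Set V) \ (A \ B) = B \ A := by
    ext u
    simp only [Set.mem_diff, Set.mem_univ, true_and, Set.mem_insert_iff,
      Set.mem_singleton_iff, not_or]
    constructor
    · rintro ⟨⟨hua, hub⟩, hn⟩
      rcases hU u hua hub with h | h
      · exact absurd h hn
      · exact h
    · intro h
      obtain ⟨h1, h2⟩ := hDX u h
      exact ⟨⟨h1, h2⟩, fun hc => h.2 hc.1⟩
  have hcompl2 : (Set.univ \ {a, b} : Set V) \ (B \ A) = A \ B := by
    ext u
    simp only [Set.mem_diff, Set.mem_univ, true_and, Set.mem_insert_iff,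
      Set.mem_singleton_iff, not_or]
    constructor
    · rintro ⟨⟨hua, hub⟩, hn⟩
      rcases hU u hua hub with h | h
      · exact h
      · exact absurd h hn
    · intro h
      obtain ⟨h1, h2⟩ := hCX u h
      exact ⟨⟨h1, h2⟩, fun hc => h.2 hc.1⟩
  have hmain : IsIntervalIn num (Set.univ \ {a, b}) (A \ B) ∨
      IsIntervalIn num (Set.univ \ {a, b}) (B \ A) := by
    rcases hhc with hconn | hconn
    · exact SepCtx.main ⟨hG, hT, hnum, hab, hCX, hDX, hU, hI, hnoedge, hAne, hBne, hconn⟩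
    · have hE' : ∀ u ∈ B \ A, ∀ v ∈ A \ B, ¬ G.Adj u v := by
        intro u hu v hv hadj
        exact hnoedge v hv u hu hadj.symm
      exact (SepCtx.main ⟨hG, hT, hnum, hab, hDX, hCX,
        fun u h1 h2 => (hU u h1 h2).symm, fun u h1 h2 => hI u h2 h1,
        hE', hBne, hAne, hconn⟩).symm
  constructor
  · rcases hmain with h | h
    · exact Or.inl h
    · right; rwa [hcompl1]
  · rcases hmain with h | h
    · right; rwa [hcompl2]
    · exact Or.inl h
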